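/- Let ω ∈ ℝ∖ℚ with convergent denominators (q_k). The following are equivalent: (1) lim_{n→∞} (1/log n) ∑_{l=0}^{k(n)} (log q_{l+1})/q_l = 0, where k(n) is defined by q_{k(n)} ≤ n < q_{k(n)+1}; (2) ∑_{l=0}^{k} (log q_{l+1})/q_l = o(log q_k) as k → ∞; (3) log q_{k+1} = o(q_k log q_k) as k → ∞. -/

import Mathlib

/-- The iterated fractional parts of the Gauss continued fraction algorithm:
`gaussIter ω n = ω_n`. -/
noncomputable def gaussIter (ω : ℝ) : ℕ → ℝ
  | 0 => Int.fract ω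
  | n + 1 => Int.fract (gaussIter ω n)⁻¹

/-- The partial quotients of the Gauss continued fraction algorithm:
`cfA ω 0 = a₀ = ⌊ω⌋`, `cfA ω (n+1) = a_{n+1} = ⌊1/ω_n⌋`. -/
noncomputable def cfA (ω : ℝ) : ℕ → ℤ
  | 0 => ⌊ω⌋
  | n + 1 => ⌊(gaussIter ω n)⁻¹⌋

/-- Denominators of the convergents: `q₋₂ = 1`, `q₋₁ = 0`, `q_n = a_n q_{n-1} + q_{n-2}`
(so `q₀ = 1`, `q₁ = a₁`). They are positive integers. -/
noncomputable def qden (ω : ℝ) : ℕ → ℕ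
  | 0 => 1
  | 1 => (cfA ω 1).toNat
  | n + 2 => (cfA ω (n + 2)).toNat * qden ω (n + 1) + qden ω n

/-- Numerators of the convergents: `p₋₂ = 0`, `p₋₁ = 1`, `p_n = a_n p_{n-1} + p_{n-2}`
(so `p₀ = a₀`, `p₁ = a₁ a₀ + 1`). -/
noncomputable def pnum (ω : ℝ) : ℕ → ℤ
  | 0 => cfA ω 0
  | 1 => cfA ω 1 * cfA ω 0 + 1
  | n + 2 => cfA ω (n + 2) * pnum ω (n + 1) + pnum ω n

/-- The denominators viewed as real numbers. -/
noncomputable def qr (ω : ℝ) (n : ℕ) : ℝ := (qden ω n : ℝ)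

/-!
Since `k (q_j) = j` and `log q_{k(n)} ≤ log n`, conditions (1) and (2) are the same statement
read along `n` and along `q_j`. For (2) ⇔ (3), split off the last term
`log q_{j+1} / q_j` of the sum: what remains is `o(log q_j)` for every irrational `ω`, because
`q_{l+2} ≥ 2 q_l` makes `∑ 1/q_l` converge while `log q_{l+1} ≤ log q_j` for `l < j`.
-/
open Finset Filter Topology

section Denominators

variable {ω : ℝ}

lemma Irrational.gaussIter (hω : Irrational ω) : ∀ n, Irrational (gaussIter ω n)
  | 0 => hω.sub_intCast _
  | n + 1 => (hω.gaussIter n).inv.sub_intCast _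

lemma gaussIter_pos (hω : Irrational ω) (n : ℕ) : 0 < gaussIter ω n :=
  (by cases n <;> exact Int.fract_nonneg _ : 0 ≤ gaussIter ω n).lt_of_ne'
    (hω.gaussIter n).ne_zero

lemma gaussIter_lt_one (n : ℕ) : gaussIter ω n < 1 := by
  cases n <;> exact Int.fract_lt_one _

lemma one_le_toNat_cfA_succ (hω : Irrational ω) (n : ℕ) : 1 ≤ (cfA ω (n + 1)).toNat := by
  have : 1 ≤ cfA ω (n + 1) := by
    rw [cfA, Int.le_floor, Int.cast_one, one_le_inv₀ (gaussIter_pos hω n)]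
    exact (gaussIter_lt_one n).le
  omega

lemma one_le_qden (hω : Irrational ω) : ∀ n, 1 ≤ qden ω n
  | 0 => le_rfl
  | 1 => one_le_toNat_cfA_succ hω 0
  | n + 2 => by
      rw [qden]
      nlinarith [one_le_qden hω (n + 1), one_le_toNat_cfA_succ hω (n + 1)]

lemma qden_add_qden_le (hω : Irrational ω) (n : ℕ) :
    qden ω n + qden ω (n + 1) ≤ qden ω (n + 2) := by
  rw [qden]
  nlinarith [one_le_qden hω (n + 1), one_le_toNat_cfA_succ hω (n + 1)]

lemma strictMono_qden_succ (hω : Irrational ω) : StrictMono fun n => qden ω (n + 1) :=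
  strictMono_nat_of_lt_succ fun n => by
    show qden ω (n + 1) < qden ω (n + 2)
    have := qden_add_qden_le hω n
    have := one_le_qden hω n
    omega

lemma qden_lt_qden (hω : Irrational ω) {i j : ℕ} (hi : 1 ≤ i) (hij : i < j) :
    qden ω i < qden ω j := by
  obtain ⟨i, rfl⟩ := Nat.exists_eq_add_of_le' hi
  obtain ⟨j, rfl⟩ := Nat.exists_eq_add_of_le' (hi.trans hij.le)
  exact strictMono_qden_succ hω (by omega)

lemma monotone_qden (hω : Irrational ω) : Monotone (qden ω) :=
  monotone_nat_of_le_succ fun n => by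
    cases n with
    | zero => exact one_le_qden hω 1
    | succ n => exact (strictMono_qden_succ hω n.lt_succ_self).le

lemma tendsto_qden_atTop (hω : Irrational ω) : Tendsto (qden ω) atTop atTop :=
  (tendsto_add_atTop_iff_nat 1).1 (strictMono_qden_succ hω).tendsto_atTop

lemma two_pow_mul_qden_le (hω : Irrational ω) (m : ℕ) :
    ∀ n, 2 ^ n * qden ω m ≤ qden ω (2 * n + m)
  | 0 => by simp
  | n + 1 => by
      have h := two_pow_mul_qden_le hω m n
      have hstep := qden_add_qden_le hω (2 * n + m)
      have hmono := monotone_qden hω (Nat.le_succ (2 * n + m))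
      rw [show 2 * (n + 1) + m = 2 * n + m + 2 by ring, pow_succ]
      nlinarith

lemma summable_inv_qr (hω : Irrational ω) : Summable fun n => (qr ω n)⁻¹ := by
  have hgeom : Summable fun n : ℕ => ((2 : ℝ)⁻¹) ^ n :=
    summable_geometric_of_lt_one (by norm_num) (by norm_num)
  have hcomp (m : ℕ) : Summable fun n => (qr ω (2 * n + m))⁻¹ := by
    refine hgeom.of_nonneg_of_le (fun n => inv_nonneg.2 (Nat.cast_nonneg _)) fun n => ?_
    rw [inv_pow]
    apply inv_anti₀ (by positivity)
    unfold qr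
    exact_mod_cast (Nat.le_mul_of_pos_right _ (one_le_qden hω m)).trans
      (two_pow_mul_qden_le hω m n)
  exact (hcomp 0).even_add_odd (hcomp 1)

end Denominators

section Index

variable {ω : ℝ} {k : ℕ → ℕ}
  (hk : ∀ n : ℕ, 1 ≤ n → qden ω (k n) ≤ n ∧ n < qden ω (k n + 1))
include hk

lemma k_qden (hω : Irrational ω) {j : ℕ} (hj : 1 ≤ j) : k (qden ω j) = j := by
  obtain ⟨hle, hlt⟩ := hk (qden ω j) (one_le_qden hω j)
  by_contra hne
  rcases Nat.lt_or_gt_of_ne hne with h | h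
  · exact absurd (monotone_qden hω h) (not_le.2 hlt)
  · exact absurd (qden_lt_qden hω hj h) (not_lt.2 hle)

lemma tendsto_k_atTop (hω : Irrational ω) : Tendsto k atTop atTop := by
  refine tendsto_atTop_atTop.2 fun b => ⟨qden ω b, fun n hn => ?_⟩
  by_contra! h
  have := (hk n ((one_le_qden hω b).trans hn)).2
  have := monotone_qden hω (show k n + 1 ≤ b by omega)
  omega

end Index

section LogSums

variable {q : ℕ → ℝ}

/-- Tannery's theorem: the `l`-th term is dominated by the summable `1 / q l` and tends to `0`
as `log (q j) → ∞`. -/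
lemma tendsto_sum_log_div_div_log (h1 : ∀ n, 1 ≤ q n) (hq : Monotone q)
    (hsum : Summable fun n => (q n)⁻¹) :
    Tendsto (fun j => (∑ l ∈ range j, Real.log (q (l + 1)) / q l) / Real.log (q j))
      atTop (𝓝 0) := by
  set f : ℕ → ℕ → ℝ := fun j l =>
    if l < j then Real.log (q (l + 1)) / q l / Real.log (q j) else 0
  have hpos (n : ℕ) : 0 < q n := one_pos.trans_le (h1 n)
  have hlog : Tendsto (fun j => Real.log (q j)) atTop atTop :=
    Real.tendsto_log_atTop.comp (hsum.tendsto_atTop_of_pos hpos)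
  have hf (j : ℕ) :
      ∑' l, f j l = (∑ l ∈ range j, Real.log (q (l + 1)) / q l) / Real.log (q j) := by
    rw [tsum_eq_sum (s := range j) fun l hl => if_neg (by simpa using hl), sum_div]
    exact sum_congr rfl fun l hl => if_pos (mem_range.1 hl)
  have hlim (l : ℕ) : Tendsto (f · l) atTop (𝓝 0) :=
    (tendsto_const_nhds.div_atTop hlog).congr' <| (eventually_gt_atTop l).mono fun j hj =>
      (if_pos hj).symm
  have hbound (j l : ℕ) : ‖f j l‖ ≤ (q l)⁻¹ := by
    by_cases hl : l < j
    · have hnum : 0 ≤ Real.log (q (l + 1)) := Real.log_nonneg (h1 _)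
      have hle : Real.log (q (l + 1)) ≤ Real.log (q j) :=
        Real.log_le_log (hpos _) (hq hl)
      simp only [f, if_pos hl]
      rw [Real.norm_of_nonneg (div_nonneg (div_nonneg hnum (hpos l).le) (hnum.trans hle)),
        div_right_comm, div_eq_mul_inv]
      exact mul_le_of_le_one_left (inv_nonneg.2 (hpos l).le)
        (div_le_one_of_le₀ hle (hnum.trans hle))
    · simp [f, hl, (hpos l).le]
  simpa [hf] using tendsto_tsum_of_dominated_convergence hsum hlim (Eventually.of_forall hbound)

lemma tendsto_sum_log_div_div_log_iff (h1 : ∀ n, 1 ≤ q n) (hq : Monotone q)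
    (hsum : Summable fun n => (q n)⁻¹) :
    Tendsto (fun j => (∑ l ∈ range (j + 1), Real.log (q (l + 1)) / q l) / Real.log (q j))
      atTop (𝓝 0) ↔
    Tendsto (fun j => Real.log (q (j + 1)) / (q j * Real.log (q j))) atTop (𝓝 0) := by
  have hsplit (j : ℕ) : (∑ l ∈ range (j + 1), Real.log (q (l + 1)) / q l) / Real.log (q j) =
      (∑ l ∈ range j, Real.log (q (l + 1)) / q l) / Real.log (q j) +
        Real.log (q (j + 1)) / (q j * Real.log (q j)) := by
    rw [sum_range_succ, add_div, div_div]
  have hhead := tendsto_sum_log_div_div_log h1 hq hsum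
  simp only [hsplit]
  exact ⟨fun h => by simpa using h.sub hhead, fun h => by simpa using hhead.add h⟩

end LogSums

lemma tendsto_comp_div_log_iff {S : ℕ → ℝ} {q k : ℕ → ℕ} (hS : ∀ j, 0 ≤ S j)
    (hq : Tendsto q atTop atTop) (hk : Tendsto k atTop atTop)
    (hkq : ∀ᶠ j in atTop, k (q j) = j) (hqk : ∀ᶠ n in atTop, q (k n) ≤ n) :
    Tendsto (fun n : ℕ => S (k n) / Real.log n) atTop (𝓝 0) ↔
    Tendsto (fun j => S j / Real.log (q j)) atTop (𝓝 0) := by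
  refine ⟨fun h => (h.comp hq).congr' (hkq.mono fun j hj => by simp [hj]), fun h => ?_⟩
  refine squeeze_zero' (Eventually.of_forall fun n => div_nonneg (hS _) ?_) ?_ (h.comp hk)
  · exact Real.log_natCast_nonneg n
  have hq2 : ∀ᶠ n in atTop, 2 ≤ q (k n) := (hq.comp hk).eventually_ge_atTop 2
  filter_upwards [hq2, hqk] with n hn2 hn
  have hlog : 0 < Real.log (q (k n)) := Real.log_pos (by exact_mod_cast hn2)
  exact div_le_div_of_nonneg_left (hS _) hlog
    (Real.log_le_log (by positivity) (by exact_mod_cast hn))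

theorem stmt4 (ω : ℝ) (hω : Irrational ω) (k : ℕ → ℕ)
    (hk : ∀ n : ℕ, 1 ≤ n → qden ω (k n) ≤ n ∧ n < qden ω (k n + 1)) :
    List.TFAE
      [ Tendsto (fun n : ℕ =>
          (∑ l ∈ Finset.range (k n + 1), Real.log (qr ω (l + 1)) / qr ω l) / Real.log n)
          atTop (nhds 0),
        Tendsto (fun j : ℕ =>
          (∑ l ∈ Finset.range (j + 1), Real.log (qr ω (l + 1)) / qr ω l) / Real.log (qr ω j))
          atTop (nhds 0),
        Tendsto (fun j : ℕ =>
          Real.log (qr ω (j + 1)) / (qr ω j * Real.log (qr ω j)))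
          atTop (nhds 0) ] := by
  have h1 (n : ℕ) : 1 ≤ qr ω n := Nat.one_le_cast.2 (one_le_qden hω n)
  have hmono : Monotone (qr ω) := fun _ _ h => Nat.cast_le.2 (monotone_qden hω h)
  have hS (j : ℕ) : 0 ≤ ∑ l ∈ range (j + 1), Real.log (qr ω (l + 1)) / qr ω l :=
    sum_nonneg fun l _ => div_nonneg (Real.log_nonneg (h1 _)) (zero_le_one.trans (h1 l))
  tfae_have 1 ↔ 2 :=
    tendsto_comp_div_log_iff hS (tendsto_qden_atTop hω) (tendsto_k_atTop hk hω)
      ((eventually_ge_atTop 1).mono fun _ => k_qden hk hω)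
      ((eventually_ge_atTop 1).mono fun n hn => (hk n hn).1)
  tfae_have 2 ↔ 3 := tendsto_sum_log_div_div_log_iff h1 hmono (summable_inv_qr hω)
  tfae_finish
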